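/- Let b ≥ 1, n ≥ 1, m ≥ 0 be integers, 0 ≤ l ≤ b−1, τ ∈ ℂ with Im τ > 0, z ∈ ℂⁿ, w ∈ ℂᵐ, and 1 ≤ μ ≤ n. Set d = bn + m. Then the genus-one Laughlin section is quasi-periodic of weight d in each particle variable: S_l(z + e_μ | w) = (−1)^{b(n−1)+m} · S_l(z | w) and S_l(z + τ·e_μ | w) = (−1)^{b(n−1)+m} · exp(−iπdτ − 2πi·d·z_μ) · S_l(z | w), where e_μ is the μ-th standard basis vector of ℂⁿ. -/

import Mathlib

open Complex BigOperators Finset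

/-- The theta function with characteristics `a, b`. -/
noncomputable def thetaChar (a b : ℝ) (z τ : ℂ) : ℂ :=
  ∑' n : ℤ, Complex.exp (Real.pi * Complex.I * ((n : ℂ) + a) ^ 2 * τ +
    2 * Real.pi * Complex.I * ((n : ℂ) + a) * (z + b))


lemma thetaChar_add_one (a c : ℝ) (z τ : ℂ) :
    thetaChar a c (z + 1) τ = Complex.exp (2 * Real.pi * Complex.I * a) * thetaChar a c z τ := by
  unfold thetaChar
  rw [← tsum_mul_left]
  refine tsum_congr fun k => ?_
  have h : Real.pi * Complex.I * ((k : ℂ) + a) ^ 2 * τ +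
      2 * Real.pi * Complex.I * ((k : ℂ) + a) * (z + 1 + c)
      = (2 * Real.pi * Complex.I * a +
        (Real.pi * Complex.I * ((k : ℂ) + a) ^ 2 * τ +
          2 * Real.pi * Complex.I * ((k : ℂ) + a) * (z + c))) + k * (2 * Real.pi * Complex.I) := by
    ring
  rw [h, Complex.exp_add, Complex.exp_int_mul_two_pi_mul_I, mul_one, Complex.exp_add]

lemma thetaChar_add_tau (a c : ℝ) (z τ : ℂ) :
    thetaChar a c (z + τ) τ =
      Complex.exp (-(Real.pi * Complex.I * τ) - 2 * Real.pi * Complex.I * (z + c)) *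
        thetaChar a c z τ := by
  unfold thetaChar
  conv_rhs => rw [← tsum_mul_left, ← (Equiv.addRight (1 : ℤ)).tsum_eq]
  refine tsum_congr fun k => ?_
  simp only [Equiv.coe_addRight]
  rw [← Complex.exp_add]
  congr 1
  push_cast
  ring

lemma thetaChar_add_nat (a c : ℝ) (z τ : ℂ) (k : ℕ) :
    thetaChar a c (z + k) τ =
      Complex.exp (2 * Real.pi * Complex.I * a * k) * thetaChar a c z τ := by
  induction k with
  | zero => simp
  | succ k ih =>
    rw [show z + ((k + 1 : ℕ) : ℂ) = (z + k) + 1 by push_cast; ring,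
      thetaChar_add_one, ih, ← mul_assoc, ← Complex.exp_add]
    congr 2
    push_cast
    ring

/-- The first Jacobi theta function `θ₁(z,τ) = θ[1/2,1/2](z,τ)`. -/
noncomputable def theta1 (z τ : ℂ) : ℂ := thetaChar (1/2) (1/2) z τ


lemma theta1_add_one (z τ : ℂ) : theta1 (z + 1) τ = -theta1 z τ := by
  unfold theta1
  rw [thetaChar_add_one,
    show (2 * (Real.pi : ℂ) * Complex.I * ((1/2 : ℝ) : ℂ)) = Real.pi * Complex.I by
      push_cast; ring,
    Complex.exp_pi_mul_I]
  ring

lemma theta1_sub_one (z τ : ℂ) : theta1 (z - 1) τ = -theta1 z τ := by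
  have h := theta1_add_one (z - 1) τ
  simp only [sub_add_cancel] at h
  linear_combination h

lemma theta1_add_tau (z τ : ℂ) :
    theta1 (z + τ) τ = -Complex.exp (-(Real.pi * Complex.I * τ) - 2 * Real.pi * Complex.I * z) *
      theta1 z τ := by
  unfold theta1
  rw [thetaChar_add_tau,
    show (-(Real.pi * Complex.I * τ) - 2 * Real.pi * Complex.I * (z + ((1/2 : ℝ) : ℂ)))
      = (-(Real.pi * Complex.I * τ) - 2 * Real.pi * Complex.I * z) + (-(Real.pi * Complex.I))
      by push_cast; ring,
    Complex.exp_add, Complex.exp_neg, Complex.exp_pi_mul_I]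
  norm_num

lemma theta1_sub_tau (z τ : ℂ) :
    theta1 (z - τ) τ = -Complex.exp (-(Real.pi * Complex.I * τ) + 2 * Real.pi * Complex.I * z) *
      theta1 z τ := by
  have h := theta1_add_tau (z - τ) τ
  simp only [sub_add_cancel] at h
  rw [h, ← mul_assoc, neg_mul_neg, ← Complex.exp_add,
    show (-(Real.pi * Complex.I * τ) + 2 * Real.pi * Complex.I * z) +
      (-(Real.pi * Complex.I * τ) - 2 * Real.pi * Complex.I * (z - τ)) = 0 by ring,
    Complex.exp_zero, one_mul]

/-- The genus-one Laughlin section with `n` particles and `m` quasiholes: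
`S_l(z|w) = θ[l/b,0](b Σ z_μ + Σ w_γ, bτ) · Π_{μ<ν} θ₁(z_μ−z_ν,τ)^b · Π_{μ,γ} θ₁(z_μ−w_γ,τ)`. -/
noncomputable def laughlinS (b n m : ℕ) (l : ℕ) (τ : ℂ)
    (z : Fin n → ℂ) (w : Fin m → ℂ) : ℂ :=
  thetaChar ((l : ℝ) / (b : ℝ)) 0 ((b : ℂ) * ∑ μ, z μ + ∑ γ, w γ) ((b : ℂ) * τ) *
    (∏ μ : Fin n, ∏ ν ∈ Finset.Ioi μ, (theta1 (z μ - z ν) τ) ^ b) *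
    ∏ μ : Fin n, ∏ γ : Fin m, theta1 (z μ - w γ) τ


lemma laughlinS_shift (b n m l : ℕ) (τ : ℂ) (z : Fin n → ℂ) (w : Fin m → ℂ) (μ : Fin n)
    (c : ℂ) (F G : ℂ → ℂ) (C : ℂ)
    (hF : ∀ x, theta1 (x + c) τ = F x * theta1 x τ)
    (hG : ∀ x, theta1 (x - c) τ = G x * theta1 x τ)
    (hC : thetaChar ((l : ℝ) / (b : ℝ)) 0 (((b : ℂ) * ∑ ν, z ν + ∑ γ, w γ) + (b : ℂ) * c)
        ((b : ℂ) * τ) =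
      C * thetaChar ((l : ℝ) / (b : ℝ)) 0 ((b : ℂ) * ∑ ν, z ν + ∑ γ, w γ) ((b : ℂ) * τ)) :
    laughlinS b n m l τ (z + Pi.single μ c) w =
      (C * ((∏ ν ∈ Ioi μ, F (z μ - z ν) ^ b) * ∏ ν ∈ Iio μ, G (z ν - z μ) ^ b)
        * ∏ γ, F (z μ - w γ)) * laughlinS b n m l τ z w := by
  set z' : Fin n → ℂ := z + Pi.single μ c with hz'
  have hμ : z' μ = z μ + c := by simp [hz']
  have hν : ∀ ν, ν ≠ μ → z' ν = z ν := by
    intro ν h; simp [hz', Pi.single_eq_of_ne h]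
  unfold laughlinS
  have hsum : ∑ ν : Fin n, z' ν = (∑ ν, z ν) + c := by
    simp [hz', Finset.sum_add_distrib]
  have harg : (b : ℂ) * ((∑ ν, z ν) + c) + ∑ γ, w γ
      = ((b : ℂ) * ∑ ν, z ν + ∑ γ, w γ) + (b : ℂ) * c := by ring
  -- pair product
  have hpair : (∏ α : Fin n, ∏ ν ∈ Finset.Ioi α, (theta1 (z' α - z' ν) τ) ^ b)
      = ((∏ ν ∈ Ioi μ, F (z μ - z ν) ^ b) * ∏ ν ∈ Iio μ, G (z ν - z μ) ^ b) *
        ∏ α : Fin n, ∏ ν ∈ Finset.Ioi α, (theta1 (z α - z ν) τ) ^ b := by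
    have step : ∀ α : Fin n, ∀ ν ∈ Finset.Ioi α,
        (theta1 (z' α - z' ν) τ) ^ b
        = (if α = μ then F (z α - z ν) ^ b else if ν = μ then G (z α - z ν) ^ b else 1) *
          (theta1 (z α - z ν) τ) ^ b := by
      intro α ν hmem
      have hne : ν ≠ α := (Finset.mem_Ioi.mp hmem).ne'
      by_cases hα : α = μ
      · subst hα
        rw [hμ, hν ν hne, if_pos rfl,
          show z α + c - z ν = (z α - z ν) + c by ring, hF, mul_pow]
      · by_cases hν' : ν = μ
        · subst hν'
          rw [hν α hα, hμ, if_neg hα, if_pos rfl,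
            show z α - (z ν + c) = (z α - z ν) - c by ring, hG, mul_pow]
        · rw [hν α hα, hν ν hν', if_neg hα, if_neg hν', one_mul]
    rw [Finset.prod_congr rfl fun α _ => Finset.prod_congr rfl (step α)]
    simp only [Finset.prod_mul_distrib]
    congr 1
    rw [← Finset.prod_erase_mul _ _ (Finset.mem_univ μ)]
    have h1 : ∏ ν ∈ Finset.Ioi μ,
        (if μ = μ then F (z μ - z ν) ^ b else if ν = μ then G (z μ - z ν) ^ b else 1)
        = ∏ ν ∈ Finset.Ioi μ, F (z μ - z ν) ^ b :=
      Finset.prod_congr rfl fun ν _ => by simp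
    have h2 : ∀ α ∈ Finset.univ.erase μ, (∏ ν ∈ Finset.Ioi α,
        (if α = μ then F (z α - z ν) ^ b else if ν = μ then G (z α - z ν) ^ b else 1))
        = if α ∈ Iio μ then G (z α - z μ) ^ b else 1 := by
      intro α hα
      have hα' : α ≠ μ := (Finset.mem_erase.mp hα).1
      rw [Finset.prod_congr rfl (fun ν _ => if_neg hα'),
        Finset.prod_ite_eq' (Finset.Ioi α) μ (fun ν => G (z α - z ν) ^ b)]
      simp [Finset.mem_Ioi, Finset.mem_Iio]
    rw [Finset.prod_congr rfl h2, h1, ← Finset.prod_filter]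
    rw [mul_comm]
    congr 1
    apply Finset.prod_congr _ fun _ _ => rfl
    ext α
    simp only [Finset.mem_filter, Finset.mem_erase, Finset.mem_univ, true_and,
      Finset.mem_Iio, and_iff_right_iff_imp]
    exact fun h => ⟨ne_of_lt h, trivial⟩
  -- hole product
  have hhole : (∏ α : Fin n, ∏ γ : Fin m, theta1 (z' α - w γ) τ)
      = (∏ γ, F (z μ - w γ)) * ∏ α : Fin n, ∏ γ : Fin m, theta1 (z α - w γ) τ := by
    have step : ∀ α : Fin n, ∀ γ ∈ (Finset.univ : Finset (Fin m)),
        theta1 (z' α - w γ) τ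
        = (if α = μ then F (z α - w γ) else 1) * theta1 (z α - w γ) τ := by
      intro α γ _
      by_cases hα : α = μ
      · subst hα
        rw [hμ, if_pos rfl, show z α + c - w γ = (z α - w γ) + c by ring, hF]
      · rw [hν α hα, if_neg hα, one_mul]
    rw [Finset.prod_congr rfl fun α _ => Finset.prod_congr rfl (step α)]
    simp only [Finset.prod_mul_distrib]
    congr 1
    rw [Finset.prod_comm]
    refine Finset.prod_congr rfl fun γ _ => ?_
    rw [Finset.prod_ite_eq' Finset.univ μ (fun α => F (z α - w γ))]
    simp
  rw [hsum, harg, hC, hpair, hhole]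
  ring

lemma sum_split {n : ℕ} (f : Fin n → ℂ) (μ : Fin n) :
    ∑ ν ∈ Iio μ, f ν + ∑ ν ∈ Ioi μ, f ν = (∑ ν, f ν) - f μ := by
  have hdisj : Disjoint (Iio μ) (Ioi μ) := by
    simp only [Finset.disjoint_left, Finset.mem_Iio, Finset.mem_Ioi]
    intro x h1 h2
    exact absurd (h1.trans h2) (lt_irrefl x)
  rw [← Finset.sum_union hdisj,
    show Iio μ ∪ Ioi μ = Finset.univ.erase μ by
      ext x; simp [Finset.mem_erase, lt_or_lt_iff_ne],
    Finset.sum_erase_eq_sub (Finset.mem_univ μ)]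

lemma card_split {n : ℕ} (μ : Fin n) : (Ioi μ).card + (Iio μ).card = n - 1 := by
  rw [Fin.card_Ioi, Fin.card_Iio]
  have := μ.isLt
  omega

/-- Quasi-periodicity of weight `d = bn + m` of the genus-one Laughlin section in
each particle variable. -/
theorem laughlinS_particle_quasiperiodicity (b n m : ℕ) (hb : 1 ≤ b) (hn : 1 ≤ n)
    (l : ℕ) (hl : l ≤ b - 1) (τ : ℂ) (hτ : 0 < τ.im)
    (z : Fin n → ℂ) (w : Fin m → ℂ) (μ : Fin n) (d : ℕ) (hd : d = b * n + m) :
    laughlinS b n m l τ (z + Pi.single μ 1) w =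
        (-1 : ℂ) ^ (b * (n - 1) + m) * laughlinS b n m l τ z w ∧
      laughlinS b n m l τ (z + Pi.single μ τ) w =
        (-1 : ℂ) ^ (b * (n - 1) + m) *
          Complex.exp (-(Real.pi * Complex.I * (d : ℂ) * τ)
            - 2 * Real.pi * Complex.I * (d : ℂ) * z μ) *
          laughlinS b n m l τ z w := by
  have hb0 : ((b : ℝ)) ≠ 0 := Nat.cast_ne_zero.mpr (by omega)
  have hbc : ((b : ℂ)) ≠ 0 := Nat.cast_ne_zero.mpr (by omega)
  constructor
  · rw [laughlinS_shift b n m l τ z w μ 1 (fun _ => -1) (fun _ => -1) 1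
      (fun x => by rw [theta1_add_one]; ring)
      (fun x => by rw [theta1_sub_one]; ring) ?_]
    · congr 1
      simp only [Finset.prod_const, one_mul, Finset.card_univ, Fintype.card_fin]
      rw [← pow_mul, ← pow_mul, ← pow_add, ← pow_add]
      congr 1
      rw [Fin.card_Ioi, Fin.card_Iio, ← Nat.mul_add,
        show n - 1 - (μ : ℕ) + (μ : ℕ) = n - 1 by have := μ.isLt; omega]
    · rw [show ((b : ℂ) * ∑ ν, z ν + ∑ γ, w γ) + (b : ℂ) * 1
          = ((b : ℂ) * ∑ ν, z ν + ∑ γ, w γ) + ((b : ℕ) : ℂ) by push_cast; ring,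
        thetaChar_add_nat]
      congr 1
      rw [show (2 * (Real.pi : ℂ) * Complex.I * (((l : ℝ) / (b : ℝ) : ℝ) : ℂ) * ((b : ℕ) : ℂ))
          = ((l : ℤ) : ℂ) * (2 * Real.pi * Complex.I) by
        push_cast
        field_simp [hbc]]
      rw [Complex.exp_int_mul_two_pi_mul_I]
  · rw [laughlinS_shift b n m l τ z w μ τ
      (fun x => -Complex.exp (-(Real.pi * Complex.I * τ) - 2 * Real.pi * Complex.I * x))
      (fun x => -Complex.exp (-(Real.pi * Complex.I * τ) + 2 * Real.pi * Complex.I * x))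
      (Complex.exp (-(Real.pi * Complex.I * ((b : ℂ) * τ)) - 2 * Real.pi * Complex.I *
        (((b : ℂ) * ∑ ν, z ν + ∑ γ, w γ) + ((0 : ℝ) : ℂ))))
      (fun x => theta1_add_tau x τ) (fun x => theta1_sub_tau x τ)
      (thetaChar_add_tau _ _ _ _), ← mul_assoc]
    congr 1
    have hIoi : ∏ ν ∈ Ioi μ,
        (-Complex.exp (-(Real.pi * Complex.I * τ) - 2 * Real.pi * Complex.I * (z μ - z ν))) ^ b
        = (-1 : ℂ) ^ (b * (Ioi μ).card) *
          Complex.exp (∑ ν ∈ Ioi μ,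
            (b : ℂ) * (-(Real.pi * Complex.I * τ) - 2 * Real.pi * Complex.I * (z μ - z ν))) := by
      rw [Finset.prod_congr rfl (fun ν _ => by
        rw [neg_pow, ← Complex.exp_nat_mul] : ∀ ν ∈ Ioi μ, _ = _),
        Finset.prod_mul_distrib, Finset.prod_const, ← pow_mul, Complex.exp_sum]
    have hIio : ∏ ν ∈ Iio μ,
        (-Complex.exp (-(Real.pi * Complex.I * τ) + 2 * Real.pi * Complex.I * (z ν - z μ))) ^ b
        = (-1 : ℂ) ^ (b * (Iio μ).card) *
          Complex.exp (∑ ν ∈ Iio μ,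
            (b : ℂ) * (-(Real.pi * Complex.I * τ) + 2 * Real.pi * Complex.I * (z ν - z μ))) := by
      rw [Finset.prod_congr rfl (fun ν _ => by
        rw [neg_pow, ← Complex.exp_nat_mul] : ∀ ν ∈ Iio μ, _ = _),
        Finset.prod_mul_distrib, Finset.prod_const, ← pow_mul, Complex.exp_sum]
    have hHole : ∏ γ : Fin m,
        (-Complex.exp (-(Real.pi * Complex.I * τ) - 2 * Real.pi * Complex.I * (z μ - w γ)))
        = (-1 : ℂ) ^ m *
          Complex.exp (∑ γ : Fin m,
            (-(Real.pi * Complex.I * τ) - 2 * Real.pi * Complex.I * (z μ - w γ))) := by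
      rw [Finset.prod_congr rfl (fun γ _ => (neg_one_mul _).symm : ∀ γ ∈ univ, _ = _),
        Finset.prod_mul_distrib, Finset.prod_const, Finset.card_univ, Fintype.card_fin,
        Complex.exp_sum]
    rw [hIoi, hIio, hHole]
    have hsigns : ((-1 : ℂ)) ^ (b * (Ioi μ).card) * (-1 : ℂ) ^ (b * (Iio μ).card) * (-1 : ℂ) ^ m
        = (-1 : ℂ) ^ (b * (n - 1) + m) := by
      rw [← pow_add, ← pow_add, ← Nat.mul_add, card_split μ]
    have hk1 : (((Ioi μ).card : ℕ) : ℂ) = (n : ℂ) - 1 - ((μ : ℕ) : ℂ) := by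
      have hμn := μ.isLt
      rw [Fin.card_Ioi, Nat.cast_sub (by omega : (μ : ℕ) ≤ n - 1), Nat.cast_sub hn]
      push_cast
      ring
    have hk2 : (((Iio μ).card : ℕ) : ℂ) = ((μ : ℕ) : ℂ) := by rw [Fin.card_Iio]
    have hz := sum_split z μ
    have hexp : (-(Real.pi * Complex.I * ((b : ℂ) * τ)) - 2 * Real.pi * Complex.I *
          (((b : ℂ) * ∑ ν, z ν + ∑ γ, w γ) + ((0 : ℝ) : ℂ)))
        + ((∑ ν ∈ Ioi μ,
            (b : ℂ) * (-(Real.pi * Complex.I * τ) - 2 * Real.pi * Complex.I * (z μ - z ν)))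
          + (∑ ν ∈ Iio μ,
            (b : ℂ) * (-(Real.pi * Complex.I * τ) + 2 * Real.pi * Complex.I * (z ν - z μ))))
        + (∑ γ : Fin m, (-(Real.pi * Complex.I * τ) - 2 * Real.pi * Complex.I * (z μ - w γ)))
        = -(Real.pi * Complex.I * (d : ℂ) * τ) - 2 * Real.pi * Complex.I * (d : ℂ) * z μ := by
      rw [Finset.sum_congr rfl (fun ν _ => show
          (b : ℂ) * (-(Real.pi * Complex.I * τ) - 2 * Real.pi * Complex.I * (z μ - z ν))
          = ((b : ℂ) * (-(Real.pi * Complex.I * τ)) - 2 * Real.pi * Complex.I * b * z μ)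
            + (2 * Real.pi * Complex.I * b) * z ν by ring),
        Finset.sum_congr rfl (fun ν _ => show
          (b : ℂ) * (-(Real.pi * Complex.I * τ) + 2 * Real.pi * Complex.I * (z ν - z μ))
          = ((b : ℂ) * (-(Real.pi * Complex.I * τ)) - 2 * Real.pi * Complex.I * b * z μ)
            + (2 * Real.pi * Complex.I * b) * z ν by ring),
        Finset.sum_congr rfl (fun γ _ => show
          (-(Real.pi * Complex.I * τ) - 2 * Real.pi * Complex.I * (z μ - w γ))
          = (-(Real.pi * Complex.I * τ) - 2 * Real.pi * Complex.I * z μ)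
            + (2 * Real.pi * Complex.I) * w γ by ring)]
      simp only [Finset.sum_add_distrib, Finset.sum_const, ← Finset.mul_sum, nsmul_eq_mul,
        Finset.card_univ, Fintype.card_fin]
      push_cast [hd, hk1, hk2]
      linear_combination (2 * (Real.pi : ℂ) * Complex.I * (b : ℂ)) * hz
    rw [← hsigns, ← hexp]
    simp only [Complex.exp_add]
    ring
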